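/- arXiv:2109.13585 — 4 statements merged into one kernel-verified Lean document; each statement's English description precedes it below -/
import Mathlib

section
/- Let σ, τ ∈ S_n, and define δ(σ,τ) = |{x ∈ {n-1, σ⁻¹(n-1), τ⁻¹(n-1)} : σ(x) ≠ τ(x)}| and δ^CT(σ,τ) = |{x ∈ {σ⁻¹(n-1), τ⁻¹(n-1)} : σ^CT(x) ≠ τ^CT(x)}|. Then hd(σ,τ) − hd(σ^CT, τ^CT) = δ(σ,τ) − δ^CT(σ,τ). -/
/-- Hamming distance between two permutations of `Fin n`. -/
def hd {n : ℕ} (σ τ : Equiv.Perm (Fin n)) : ℕ :=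
  (Finset.univ.filter fun x => σ x ≠ τ x).card

/-- Contraction of a permutation: delete the symbol `n` (the largest one)
from the cycle decomposition of `σ`. -/
def contract {n : ℕ} (σ : Equiv.Perm (Fin (n + 1))) : Equiv.Perm (Fin n) :=
  Equiv.removeNone (finSuccEquivLast.permCongr σ)

/-- Extension of a permutation of `Fin n` to a permutation of `Fin (n+1)`
fixing the last symbol. -/
def extendPerm {n : ℕ} (π : Equiv.Perm (Fin n)) : Equiv.Perm (Fin (n + 1)) :=
  finSuccEquivLast.permCongr.symm (Equiv.optionCongr π)

/-- `m`-fold iterated contraction. -/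
def contractIter : ∀ (m : ℕ) {n : ℕ}, Equiv.Perm (Fin (n + m)) → Equiv.Perm (Fin n)
  | 0, _, σ => σ
  | m + 1, _, σ => contractIter m (contract σ)

/-- Hamming distance of a permutation array: the minimum Hamming distance
between distinct elements. -/
noncomputable def hdP {n : ℕ} (P : Set (Equiv.Perm (Fin n))) : ℕ :=
  sInf {d | ∃ σ ∈ P, ∃ τ ∈ P, σ ≠ τ ∧ hd σ τ = d}

lemma ext_castSucc {n : ℕ} (π : Equiv.Perm (Fin n)) (x : Fin n) :
    extendPerm π x.castSucc = (π x).castSucc := by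
  simp [extendPerm, Equiv.permCongr_apply]

lemma ext_last {n : ℕ} (π : Equiv.Perm (Fin n)) :
    extendPerm π (Fin.last n) = Fin.last n := by
  simp [extendPerm, Equiv.permCongr_apply]

lemma contract_castSucc {n : ℕ} (σ : Equiv.Perm (Fin (n+1))) (x : Fin n)
    (h : σ x.castSucc ≠ Fin.last n) :
    (contract σ x).castSucc = σ x.castSucc := by
  have h2 : finSuccEquivLast (σ x.castSucc) = some ((σ x.castSucc).castPred h) := by
    rw [Equiv.apply_eq_iff_eq_symm_apply]
    simp [finSuccEquivLast_symm_some, Fin.castSucc_castPred]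
  have := Equiv.removeNone_some (finSuccEquivLast.permCongr σ)
    (x := x) ⟨(σ x.castSucc).castPred h, by simpa [Equiv.permCongr_apply] using h2⟩
  simp only [Equiv.permCongr_apply, Equiv.symm_symm, finSuccEquivLast_castSucc] at this
  have := congrArg finSuccEquivLast.symm this
  simpa [contract] using this

lemma contract_atLast {n : ℕ} (σ : Equiv.Perm (Fin (n+1))) (x : Fin n)
    (h : σ x.castSucc = Fin.last n) :
    (contract σ x).castSucc = σ (Fin.last n) := by
  have h2 : (finSuccEquivLast.permCongr σ) (some x) = none := by
    simp [Equiv.permCongr_apply, h]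
  have := Equiv.removeNone_none (finSuccEquivLast.permCongr σ) h2
  simp only [Equiv.permCongr_apply, Equiv.symm_symm, finSuccEquivLast_symm_none] at this
  have := congrArg finSuccEquivLast.symm this
  simpa [contract] using this

lemma extc_eq {n : ℕ} (σ : Equiv.Perm (Fin (n+1))) {x : Fin (n+1)}
    (hx : x ≠ Fin.last n) (hσ : σ x ≠ Fin.last n) :
    extendPerm (contract σ) x = σ x := by
  rw [← Fin.castSucc_castPred x hx] at hσ ⊢
  rw [ext_castSucc, contract_castSucc σ _ hσ]

theorem hd_sub_hd_contract_eq_delta_sub_deltaCT (n : ℕ) (σ τ : Equiv.Perm (Fin (n + 1))) :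
    (hd σ τ : ℤ) - (hd (contract σ) (contract τ) : ℤ) =
      ((({Fin.last n, σ⁻¹ (Fin.last n), τ⁻¹ (Fin.last n)} : Finset (Fin (n + 1))).filter
          fun x => σ x ≠ τ x).card : ℤ) -
        ((({σ⁻¹ (Fin.last n), τ⁻¹ (Fin.last n)} : Finset (Fin (n + 1))).filter
          fun x => extendPerm (contract σ) x ≠ extendPerm (contract τ) x).card : ℤ) := by
  classical
  set p : Fin (n+1) → Prop := fun x => σ x ≠ τ x with hp
  set q : Fin (n+1) → Prop := fun x => extendPerm (contract σ) x ≠ extendPerm (contract τ) x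
    with hq
  set S : Finset (Fin (n+1)) := {Fin.last n, σ⁻¹ (Fin.last n), τ⁻¹ (Fin.last n)} with hS
  set T : Finset (Fin (n+1)) := {σ⁻¹ (Fin.last n), τ⁻¹ (Fin.last n)} with hT
  set A : Finset (Fin (n+1)) := Finset.univ.filter p with hA
  set B : Finset (Fin (n+1)) := Finset.univ.filter q with hB
  have hqlast : ¬ q (Fin.last n) := by simp [hq, ext_last]
  have hpq : ∀ x : Fin (n+1), x ≠ Fin.last n → x ≠ σ⁻¹ (Fin.last n) → x ≠ τ⁻¹ (Fin.last n) →
      (q x ↔ p x) := by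
    intro x h1 h2 h3
    have hσ : σ x ≠ Fin.last n := fun h => h2 (by simp [← h])
    have hτ : τ x ≠ Fin.last n := fun h => h3 (by simp [← h])
    rw [hp, hq]
    simp only [extc_eq σ h1 hσ, extc_eq τ h1 hτ]
  -- hd of contractions equals card of B
  have hhdB : hd (contract σ) (contract τ) = B.card := by
    apply Finset.card_bij (fun y _ => Fin.castSucc y)
    · intro y hy
      simp only [hB, Finset.mem_filter, Finset.mem_univ, true_and] at hy ⊢
      simp only [hq, ext_castSucc, ne_eq, Fin.castSucc_inj]
      exact hy
    · intro a _ b _ h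
      exact Fin.castSucc_injective n h
    · intro x hx
      simp only [hB, Finset.mem_filter, Finset.mem_univ, true_and] at hx
      have hxl : x ≠ Fin.last n := fun h => (h ▸ hqlast) hx
      refine ⟨x.castPred hxl, ?_, by simp⟩
      simp only [Finset.mem_filter, Finset.mem_univ, true_and]
      have := hx
      rw [hq, ← Fin.castSucc_castPred x hxl, ext_castSucc, ext_castSucc] at this
      exact fun h => this (congrArg Fin.castSucc h)
  have hASBT : A \ S = B \ T := by
    ext x
    simp only [Finset.mem_sdiff, hA, hB, Finset.mem_filter, Finset.mem_univ, true_and,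
      hS, hT, Finset.mem_insert, Finset.mem_singleton, not_or]
    constructor
    · rintro ⟨hpx, h1, h2, h3⟩
      exact ⟨(hpq x h1 h2 h3).mpr hpx, h2, h3⟩
    · rintro ⟨hqx, h2, h3⟩
      have h1 : x ≠ Fin.last n := fun h => (h ▸ hqlast) hqx
      exact ⟨(hpq x h1 h2 h3).mp hqx, h1, h2, h3⟩
  have hfiltS : S.filter p = A ∩ S := by
    ext x; simp only [hA, Finset.mem_filter, Finset.mem_inter, Finset.mem_univ, true_and]; tauto
  have hfiltT : T.filter q = B ∩ T := by
    ext x; simp only [hB, Finset.mem_filter, Finset.mem_inter, Finset.mem_univ, true_and]; tauto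
  have c1 : (A ∩ S).card + (A \ S).card = A.card := Finset.card_inter_add_card_sdiff A S
  have c2 : (B ∩ T).card + (B \ T).card = B.card := Finset.card_inter_add_card_sdiff B T
  have hhdA : hd σ τ = A.card := rfl
  rw [hhdA, hhdB, hfiltS, hfiltT]
  have := congrArg Finset.card hASBT
  omega
end

section
/- Let σ, τ ∈ S_n and set i = σ⁻¹(n-1), j = τ⁻¹(n-1), a = τ(i), b = σ(j), c = σ(n-1), d = τ(n-1). If i, j, n-1 are pairwise distinct, a = c, and b = d, then hd(σ,τ) − hd(σ^CT, τ^CT) = 3. -/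
lemma contract_castSucc_of_ne {n : ℕ} (σ : Equiv.Perm (Fin (n + 1))) (x : Fin n)
    (h : σ x.castSucc ≠ Fin.last n) :
    (contract σ x).castSucc = σ x.castSucc := by
  have he : (finSuccEquivLast.permCongr σ) (some x)
      = some ((σ x.castSucc).castPred h) := by
    simp [Equiv.permCongr_apply, ← finSuccEquivLast_castSucc, Fin.castSucc_castPred]
  have := Equiv.removeNone_some (finSuccEquivLast.permCongr σ)
    ⟨(σ x.castSucc).castPred h, he⟩
  rw [he] at this
  have h2 : contract σ x = (σ x.castSucc).castPred h := Option.some_injective _ this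
  rw [h2, Fin.castSucc_castPred]

lemma contract_castSucc_of_eq {n : ℕ} (σ : Equiv.Perm (Fin (n + 1))) (x : Fin n)
    (h : σ x.castSucc = Fin.last n) (h2 : σ (Fin.last n) ≠ Fin.last n) :
    (contract σ x).castSucc = σ (Fin.last n) := by
  have he : (finSuccEquivLast.permCongr σ) (some x) = none := by
    simp [Equiv.permCongr_apply, h]
  have := Equiv.removeNone_none (finSuccEquivLast.permCongr σ) he
  have he2 : (finSuccEquivLast.permCongr σ) none
      = some ((σ (Fin.last n)).castPred h2) := by
    simp [Equiv.permCongr_apply, ← finSuccEquivLast_castSucc, Fin.castSucc_castPred]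
  rw [he2] at this
  have h3 : contract σ x = (σ (Fin.last n)).castPred h2 := Option.some_injective _ this
  rw [h3, Fin.castSucc_castPred]

theorem hd_sub_hd_contract_eq_three_of (n : ℕ) (σ τ : Equiv.Perm (Fin (n + 1)))
    (hij : σ⁻¹ (Fin.last n) ≠ τ⁻¹ (Fin.last n))
    (hi : σ⁻¹ (Fin.last n) ≠ Fin.last n) (hj : τ⁻¹ (Fin.last n) ≠ Fin.last n)
    (hac : τ (σ⁻¹ (Fin.last n)) = σ (Fin.last n))
    (hbd : σ (τ⁻¹ (Fin.last n)) = τ (Fin.last n)) :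
    (hd σ τ : ℤ) - (hd (contract σ) (contract τ) : ℤ) = 3 := by
  classical
  set L := Fin.last n with hL
  set i := σ⁻¹ L with hidef
  set j := τ⁻¹ L with hjdef
  have hσi : σ i = L := σ.apply_symm_apply L
  have hτj : τ j = L := τ.apply_symm_apply L
  have hcL : σ L ≠ L := fun h => hi (by rw [hidef, ← h, (show ∀ y, σ⁻¹ (σ y) = y by exact σ.symm_apply_apply), h])
  have hdL : τ L ≠ L := fun h => hj (by rw [hjdef, ← h, (show ∀ y, τ⁻¹ (τ y) = y by exact τ.symm_apply_apply), h])
  have hcd : σ L ≠ τ L := fun h => hi (τ.injective (hac.trans h))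
  set S : Finset (Fin (n + 1)) := Finset.univ.filter fun x => σ x ≠ τ x with hS
  set S' : Finset (Fin n) :=
    Finset.univ.filter fun x => contract σ x ≠ contract τ x with hS'
  have hmem : ∀ x : Fin n,
      (x ∈ S' ↔ x.castSucc ∈ S ∧ x.castSucc ≠ i ∧ x.castSucc ≠ j) := by
    intro x
    have hxL : x.castSucc ≠ L := Fin.castSucc_lt_last x |>.ne
    by_cases hx1 : x.castSucc = i
    · have h1 : σ x.castSucc = L := by rw [hx1, hσi]
      have h2 : τ x.castSucc ≠ L := by
        rw [hx1, hac]
        exact hcL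
      have e1 : (contract σ x).castSucc = σ L := contract_castSucc_of_eq σ x h1 hcL
      have e2 : (contract τ x).castSucc = σ L := by
        rw [contract_castSucc_of_ne τ x h2, hx1, hac]
      have : contract σ x = contract τ x :=
        Fin.castSucc_injective _ (e1.trans e2.symm)
      simp [hS', this, hx1]
    · by_cases hx2 : x.castSucc = j
      · have h1 : σ x.castSucc ≠ L := by
          rw [hx2, hbd]
          exact hdL
        have h2 : τ x.castSucc = L := by rw [hx2, hτj]
        have e1 : (contract σ x).castSucc = τ L := by
          rw [contract_castSucc_of_ne σ x h1, hx2, hbd]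
        have e2 : (contract τ x).castSucc = τ L := contract_castSucc_of_eq τ x h2 hdL
        have : contract σ x = contract τ x :=
          Fin.castSucc_injective _ (e1.trans e2.symm)
        simp [hS', this, hx2]
      · have h1 : σ x.castSucc ≠ L := by
          intro h
          exact hx1 (by rw [hidef, ← h, (show ∀ y, σ⁻¹ (σ y) = y by exact σ.symm_apply_apply)])
        have h2 : τ x.castSucc ≠ L := by
          intro h
          exact hx2 (by rw [hjdef, ← h, (show ∀ y, τ⁻¹ (τ y) = y by exact τ.symm_apply_apply)])
        have e1 := contract_castSucc_of_ne σ x h1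
        have e2 := contract_castSucc_of_ne τ x h2
        constructor
        · intro hxS
          refine ⟨?_, hx1, hx2⟩
          simp only [hS', Finset.mem_filter, Finset.mem_univ, true_and] at hxS
          simp only [hS, Finset.mem_filter, Finset.mem_univ, true_and]
          intro h
          exact hxS (Fin.castSucc_injective _ (by rw [e1, e2, h]))
        · rintro ⟨hxS, -, -⟩
          simp only [hS, Finset.mem_filter, Finset.mem_univ, true_and] at hxS
          simp only [hS', Finset.mem_filter, Finset.mem_univ, true_and]
          intro h
          exact hxS (by rw [← e1, ← e2, h])
  set T : Finset (Fin (n + 1)) := {i, j, L} with hT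
  have hiS : i ∈ S := by
    simp only [hS, Finset.mem_filter, Finset.mem_univ, true_and]
    rw [hσi, hac]
    exact fun h => hcL h.symm
  have hjS : j ∈ S := by
    simp only [hS, Finset.mem_filter, Finset.mem_univ, true_and]
    rw [hτj, hbd]
    exact hdL
  have hLS : L ∈ S := by
    simp only [hS, Finset.mem_filter, Finset.mem_univ, true_and]
    exact hcd
  have hTS : T ⊆ S := by
    intro y hy
    simp only [hT, Finset.mem_insert, Finset.mem_singleton] at hy
    rcases hy with rfl | rfl | rfl
    exacts [hiS, hjS, hLS]
  have hTcard : T.card = 3 := by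
    rw [hT, Finset.card_insert_of_notMem (by simp [hij, hi]),
      Finset.card_insert_of_notMem (by simp [hj]), Finset.card_singleton]
  have himg : S'.image Fin.castSucc = S \ T := by
    ext y
    simp only [Finset.mem_image, Finset.mem_sdiff, hT, Finset.mem_insert,
      Finset.mem_singleton]
    constructor
    · rintro ⟨x, hx, rfl⟩
      rw [hmem] at hx
      exact ⟨hx.1, by
        push_neg
        exact ⟨hx.2.1, hx.2.2, (Fin.castSucc_lt_last x).ne⟩⟩
    · rintro ⟨hyS, hy⟩
      push_neg at hy
      refine ⟨y.castPred hy.2.2, ?_, Fin.castSucc_castPred y hy.2.2⟩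
      rw [hmem, Fin.castSucc_castPred]
      exact ⟨hyS, hy.1, hy.2.1⟩
  have hScard : S.card = S'.card + 3 := by
    have h1 : (S \ T).card + T.card = S.card :=
      Finset.card_sdiff_add_card_eq_card hTS
    have h2 : (S'.image Fin.castSucc).card = S'.card :=
      Finset.card_image_of_injective _ (Fin.castSucc_injective n)
    rw [← h1, ← himg, h2, hTcard]
  have : hd σ τ = hd (contract σ) (contract τ) + 3 := hScard
  rw [this]
  push_cast
  ring
end

section
/- Let σ, τ ∈ S_n and set i = σ⁻¹(n-1), j = τ⁻¹(n-1), a = τ(i), b = σ(j), c = σ(n-1), d = τ(n-1). If i, j, n-1 are pairwise distinct and a, b, c, d are pairwise distinct, then hd(σ,τ) − hd(σ^CT, τ^CT) = 1. -/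
lemma castSucc_contract_apply {n : ℕ} (σ : Equiv.Perm (Fin (n + 1))) (x : Fin n) :
    Fin.castSucc (contract σ x) =
      if σ x.castSucc = Fin.last n then σ (Fin.last n) else σ x.castSucc := by
  set e := finSuccEquivLast.permCongr σ with he
  have heval : ∀ y : Fin (n + 1), e (finSuccEquivLast y) = finSuccEquivLast (σ y) := by
    intro y; simp [he, Equiv.permCongr_apply]
  by_cases h : σ x.castSucc = Fin.last n
  · have hnone : e (some x) = none := by
      have := heval x.castSucc
      rwa [finSuccEquivLast_castSucc, h, finSuccEquivLast_last] at this
    have h2 : some (contract σ x) = e none := Equiv.removeNone_none e hnone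
    have hlast : σ (Fin.last n) ≠ Fin.last n := by
      intro hc
      exact (Fin.castSucc_lt_last x).ne (σ.injective (h.trans hc.symm))
    obtain ⟨z, hz⟩ : ∃ z : Fin n, σ (Fin.last n) = z.castSucc :=
      ⟨(σ (Fin.last n)).castLT (Fin.lt_last_iff_ne_last.2 hlast), by simp [Fin.castSucc_castLT]⟩
    have := heval (Fin.last n)
    rw [finSuccEquivLast_last, hz, finSuccEquivLast_castSucc] at this
    have hzz : contract σ x = z := Option.some_injective _ (h2.trans this)
    rw [if_pos h, hz, hzz]
  · have hsome : e (some x) = some ((σ x.castSucc).castLT (Fin.lt_last_iff_ne_last.2 h)) := by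
      have := heval x.castSucc
      rw [finSuccEquivLast_castSucc] at this
      rw [this]
      have h3 : σ x.castSucc = Fin.castSucc ((σ x.castSucc).castLT (Fin.lt_last_iff_ne_last.2 h)) := by
        simp [Fin.castSucc_castLT]
      conv_lhs => rw [h3]
      rw [finSuccEquivLast_castSucc]
    have h2 : some (contract σ x) = e (some x) := Equiv.removeNone_some e ⟨_, hsome⟩
    rw [hsome] at h2
    have := Option.some_injective _ h2
    rw [if_neg h, this]
    simp [Fin.castSucc_castLT]

theorem hd_sub_hd_contract_eq_one_of (n : ℕ) (σ τ : Equiv.Perm (Fin (n + 1)))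
    (hij : σ⁻¹ (Fin.last n) ≠ τ⁻¹ (Fin.last n))
    (hi : σ⁻¹ (Fin.last n) ≠ Fin.last n) (hj : τ⁻¹ (Fin.last n) ≠ Fin.last n)
    (hab : τ (σ⁻¹ (Fin.last n)) ≠ σ (τ⁻¹ (Fin.last n)))
    (hac : τ (σ⁻¹ (Fin.last n)) ≠ σ (Fin.last n))
    (had : τ (σ⁻¹ (Fin.last n)) ≠ τ (Fin.last n))
    (hbc : σ (τ⁻¹ (Fin.last n)) ≠ σ (Fin.last n))
    (hbd : σ (τ⁻¹ (Fin.last n)) ≠ τ (Fin.last n))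
    (hcd : σ (Fin.last n) ≠ τ (Fin.last n)) :
    (hd σ τ : ℤ) - (hd (contract σ) (contract τ) : ℤ) = 1 := by
  have key : ∀ x : Fin n, (contract σ x ≠ contract τ x) ↔ σ x.castSucc ≠ τ x.castSucc := by
    intro x
    have hs := castSucc_contract_apply σ x
    have ht := castSucc_contract_apply τ x
    constructor
    · intro hne heq
      apply hne
      apply Fin.castSucc_injective
      rw [hs, ht, heq]
      by_cases h : τ x.castSucc = Fin.last n
      · rw [if_pos h, if_pos h]
        -- σ xc = τ xc = last  ⇒ contradiction with hij
        exfalso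
        have e1 : σ⁻¹ (Fin.last n) = x.castSucc := by
          rw [← (heq.trans h)]; exact Equiv.symm_apply_apply σ _
        have e2 : τ⁻¹ (Fin.last n) = x.castSucc := by
          rw [← h]; exact Equiv.symm_apply_apply τ _
        exact hij (e1.trans e2.symm)
      · rw [if_neg h, if_neg h]
    · intro hne heq
      apply hne
      have := congrArg Fin.castSucc heq
      rw [hs, ht] at this
      by_cases h1 : σ x.castSucc = Fin.last n
      · by_cases h2 : τ x.castSucc = Fin.last n
        · exact absurd (h1.trans h2.symm) (by simpa using hne)
        · -- x.castSucc = σ⁻¹ last; this : σ last = τ x.castSucc, contradicting hac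
          rw [if_pos h1, if_neg h2] at this
          exfalso
          apply hac
          have hx : x.castSucc = σ⁻¹ (Fin.last n) := by
            rw [← h1]; exact (Equiv.symm_apply_apply σ _).symm
          rw [hx] at this
          exact this.symm
      · by_cases h2 : τ x.castSucc = Fin.last n
        · rw [if_neg h1, if_pos h2] at this
          exfalso
          apply hbd
          have hx : x.castSucc = τ⁻¹ (Fin.last n) := by
            rw [← h2]; exact (Equiv.symm_apply_apply τ _).symm
          rw [hx] at this
          exact this
        · rw [if_neg h1, if_neg h2] at this
          exact absurd this hne
  have hset : (Finset.univ.filter fun y => σ y ≠ τ y) =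
      insert (Fin.last n)
        ((Finset.univ.filter fun x => contract σ x ≠ contract τ x).image Fin.castSucc) := by
    ext y
    simp only [Finset.mem_filter, Finset.mem_univ, true_and, Finset.mem_insert,
      Finset.mem_image]
    constructor
    · intro hy
      rcases Fin.eq_castSucc_or_eq_last y with ⟨x, rfl⟩ | rfl
      · exact Or.inr ⟨x, by simpa [Finset.mem_filter] using (key x).2 hy, rfl⟩
      · exact Or.inl rfl
    · rintro (rfl | ⟨x, hx, rfl⟩)
      · exact hcd
      · exact (key x).1 (by simpa [Finset.mem_filter] using hx)
  have hnotmem : Fin.last n ∉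
      ((Finset.univ.filter fun x => contract σ x ≠ contract τ x).image Fin.castSucc) := by
    intro hmem
    obtain ⟨x, -, hx⟩ := Finset.mem_image.1 hmem
    exact (Fin.castSucc_lt_last x).ne hx
  have hcard : hd σ τ = hd (contract σ) (contract τ) + 1 := by
    unfold hd
    rw [hset, Finset.card_insert_of_notMem hnotmem,
      Finset.card_image_of_injective _ (Fin.castSucc_injective n)]
  rw [hcard]; push_cast; ring
end

section
/- Let σ, τ ∈ S_n with hd(σ,τ) = d, and suppose the disjoint cycle decomposition of σ⁻¹τ has no cycle of length 3 (equivalently, no orbit of σ⁻¹τ has size exactly 3). Then hd(σ^CT, τ^CT) ≥ d − 2. -/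
lemma contract_apply_of_ne {n : ℕ} (σ : Equiv.Perm (Fin (n + 1))) (x : Fin n)
    (h : σ (Fin.castSucc x) ≠ Fin.last n) :
    Fin.castSucc (contract σ x) = σ (Fin.castSucc x) := by
  obtain ⟨y, hy⟩ := Fin.eq_castSucc_of_ne_last h
  have h1 : (finSuccEquivLast.permCongr σ) (some x) = some y := by
    simp [Equiv.permCongr_apply, ← hy]
  have := Equiv.removeNone_some (finSuccEquivLast.permCongr σ) ⟨y, h1⟩
  rw [h1] at this
  simpa [contract, ← hy] using congrArg (Option.map Fin.castSucc) this

lemma contract_apply_of_eq {n : ℕ} (σ : Equiv.Perm (Fin (n + 1))) (x : Fin n)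
    (h : σ (Fin.castSucc x) = Fin.last n) :
    Fin.castSucc (contract σ x) = σ (Fin.last n) := by
  have hne : σ (Fin.last n) ≠ Fin.last n := by
    intro hc
    exact absurd (σ.injective (h.trans hc.symm)) (Fin.castSucc_lt_last x).ne
  obtain ⟨y, hy⟩ := Fin.eq_castSucc_of_ne_last hne
  have h1 : (finSuccEquivLast.permCongr σ) (some x) = none := by
    simp [Equiv.permCongr_apply, h]
  have := Equiv.removeNone_none (finSuccEquivLast.permCongr σ) h1
  have h2 : (finSuccEquivLast.permCongr σ) none = some y := by
    simp [Equiv.permCongr_apply, ← hy]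
  rw [h2] at this
  rw [contract]
  rw [Option.some.injEq] at this
  rw [this, hy]

theorem hd_contract_ge_of_no_three_cycle (n d : ℕ) (σ τ : Equiv.Perm (Fin (n + 1)))
    (hdist : hd σ τ = d)
    (hcyc : ∀ x : Fin (n + 1), ((τ * σ⁻¹).cycleOf x).support.card ≠ 3) :
    (hd (contract σ) (contract τ) : ℤ) ≥ (d : ℤ) - 2 := by
  classical
  set N : Fin (n + 1) := Fin.last n with hN
  set a : Fin (n + 1) := σ⁻¹ N with ha
  set b : Fin (n + 1) := τ⁻¹ N with hb
  set D : Finset (Fin (n + 1)) := Finset.univ.filter fun x => σ x ≠ τ x with hD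
  set S : Finset (Fin n) := Finset.univ.filter fun x => contract σ x ≠ contract τ x with hS
  have hσa : σ a = N := by simp [ha]
  have hτb : τ b = N := by simp [hb]
  -- generic membership lemma
  have hmem : ∀ x : Fin (n + 1), x ∈ D → x ≠ N → x ≠ a → x ≠ b →
      ∃ x' : Fin n, Fin.castSucc x' = x ∧ x' ∈ S := by
    intro x hx hxN hxa hxb
    obtain ⟨x', hx'⟩ := Fin.eq_castSucc_of_ne_last hxN
    refine ⟨x', hx', ?_⟩
    have hσ : σ x ≠ N := fun hc => hxa (by rw [ha, ← hc, Equiv.Perm.inv_def, Equiv.symm_apply_apply])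
    have hτ : τ x ≠ N := fun hc => hxb (by rw [hb, ← hc, Equiv.Perm.inv_def, Equiv.symm_apply_apply])
    have e1 := contract_apply_of_ne σ x' (by rw [hx']; exact hσ)
    have e2 := contract_apply_of_ne τ x' (by rw [hx']; exact hτ)
    simp only [hS, Finset.mem_filter, Finset.mem_univ, true_and]
    intro hc
    have : σ x = τ x := by
      rw [← hx', ← e1, ← e2, hc]
    exact (Finset.mem_filter.mp hx).2 this
  -- main counting claim
  have key : ∃ E : Finset (Fin (n + 1)), E.card ≤ 2 ∧ D ⊆ S.image Fin.castSucc ∪ E := by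
    by_cases haN : a = N
    · refine ⟨{N, b}, Finset.card_insert_le _ _ |>.trans (by simp), ?_⟩
      intro x hx
      by_cases h1 : x = N; · simp [h1]
      by_cases h2 : x = b; · simp [h2]
      obtain ⟨x', hx', hx'S⟩ := hmem x hx h1 (by rw [haN]; exact h1) h2
      exact Finset.mem_union_left _ (Finset.mem_image.mpr ⟨x', hx'S, hx'⟩)
    by_cases hbN : b = N
    · refine ⟨{N, a}, Finset.card_insert_le _ _ |>.trans (by simp), ?_⟩
      intro x hx
      by_cases h1 : x = N; · simp [h1]
      by_cases h2 : x = a; · simp [h2]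
      obtain ⟨x', hx', hx'S⟩ := hmem x hx h1 h2 (by rw [hbN]; exact h1)
      exact Finset.mem_union_left _ (Finset.mem_image.mpr ⟨x', hx'S, hx'⟩)
    by_cases hab : a = b
    · refine ⟨{N, a}, Finset.card_insert_le _ _ |>.trans (by simp), ?_⟩
      intro x hx
      by_cases h1 : x = N; · simp [h1]
      by_cases h2 : x = a; · simp [h2]
      obtain ⟨x', hx', hx'S⟩ := hmem x hx h1 h2 (by rw [← hab]; exact h2)
      exact Finset.mem_union_left _ (Finset.mem_image.mpr ⟨x', hx'S, hx'⟩)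
    by_cases hNd : σ N = τ N
    · refine ⟨{a, b}, Finset.card_insert_le _ _ |>.trans (by simp), ?_⟩
      intro x hx
      by_cases h2 : x = a; · simp [h2]
      by_cases h3 : x = b; · simp [h3]
      have h1 : x ≠ N := by
        intro hc; exact (Finset.mem_filter.mp hx).2 (by rw [hc]; exact hNd)
      obtain ⟨x', hx', hx'S⟩ := hmem x hx h1 h2 h3
      exact Finset.mem_union_left _ (Finset.mem_image.mpr ⟨x', hx'S, hx'⟩)
    by_cases hca : σ N = τ a
    rotate_left
    · -- a gives new disagreement; E = {N, b}
      refine ⟨{N, b}, Finset.card_insert_le _ _ |>.trans (by simp), ?_⟩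
      intro x hx
      by_cases h1 : x = N; · simp [h1]
      by_cases h3 : x = b; · simp [h3]
      by_cases h2 : x = a
      · -- show x = a maps into image
        obtain ⟨a', ha'⟩ := Fin.eq_castSucc_of_ne_last haN
        refine Finset.mem_union_left _ (Finset.mem_image.mpr ⟨a', ?_, by rw [ha', h2]⟩)
        have e1 : Fin.castSucc (contract σ a') = σ N :=
          contract_apply_of_eq σ a' (by rw [ha']; exact hσa)
        have e2 : Fin.castSucc (contract τ a') = τ a := by
          rw [← ha']
          refine contract_apply_of_ne τ a' ?_
          rw [ha']
          intro hc
          exact hab (by rw [hb, hN, ← hc, Equiv.Perm.inv_def, Equiv.symm_apply_apply])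
        simp only [hS, Finset.mem_filter, Finset.mem_univ, true_and]
        intro hc
        exact hca (by rw [← e1, ← e2, hc])
      obtain ⟨x', hx', hx'S⟩ := hmem x hx h1 h2 h3
      exact Finset.mem_union_left _ (Finset.mem_image.mpr ⟨x', hx'S, hx'⟩)
    by_cases hcb : σ b = τ N
    rotate_left
    · refine ⟨{N, a}, Finset.card_insert_le _ _ |>.trans (by simp), ?_⟩
      intro x hx
      by_cases h1 : x = N; · simp [h1]
      by_cases h2 : x = a; · simp [h2]
      by_cases h3 : x = b
      · obtain ⟨b', hb'⟩ := Fin.eq_castSucc_of_ne_last hbN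
        refine Finset.mem_union_left _ (Finset.mem_image.mpr ⟨b', ?_, by rw [hb', h3]⟩)
        have e2 : Fin.castSucc (contract τ b') = τ N :=
          contract_apply_of_eq τ b' (by rw [hb']; exact hτb)
        have e1 : Fin.castSucc (contract σ b') = σ b := by
          rw [← hb']
          refine contract_apply_of_ne σ b' ?_
          rw [hb']
          intro hc
          exact hab (by rw [ha, hN, ← hc, Equiv.Perm.inv_def, Equiv.symm_apply_apply])
        simp only [hS, Finset.mem_filter, Finset.mem_univ, true_and]
        intro hc
        exact hcb (by rw [← e1, ← e2, hc])
      obtain ⟨x', hx', hx'S⟩ := hmem x hx h1 h2 h3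
      exact Finset.mem_union_left _ (Finset.mem_image.mpr ⟨x', hx'S, hx'⟩)
    -- contradiction case: 3-cycle through N
    exfalso
    set π : Equiv.Perm (Fin (n + 1)) := τ * σ⁻¹ with hπ
    have hπN : π N = σ N := by
      simp only [hπ, Equiv.Perm.mul_apply]; rw [← ha, hca]
    have hπs : π (σ N) = σ b := by
      simp only [hπ, Equiv.Perm.mul_apply, Equiv.Perm.inv_def, Equiv.symm_apply_apply]; exact hcb.symm
    have hπt : π (σ b) = N := by
      simp only [hπ, Equiv.Perm.mul_apply, Equiv.Perm.inv_def, Equiv.symm_apply_apply]; exact hτb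
    have hNs : σ N ≠ N := fun hc =>
      haN (by rw [ha, Equiv.Perm.inv_eq_iff_eq]; exact hc.symm)
    have hNt : σ b ≠ N := fun hc =>
      hab (by rw [ha, Equiv.Perm.inv_eq_iff_eq]; exact hc.symm)
    have hst : σ N ≠ σ b := fun hc => hbN (σ.injective hc).symm
    have horbit : ∀ i : ℕ, (π ^ i) N ∈ ({N, σ N, σ b} : Finset (Fin (n + 1))) := by
      intro i
      induction i with
      | zero => simp
      | succ k ih =>
        rw [pow_succ', Equiv.Perm.mul_apply]
        simp only [Finset.mem_insert, Finset.mem_singleton] at ih ⊢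
        rcases ih with h | h | h <;> rw [h]
        · rw [hπN]; tauto
        · rw [hπs]; tauto
        · rw [hπt]; tauto
    have hNsupp : N ∈ π.support := by
      rw [Equiv.Perm.mem_support, hπN]; exact hNs
    have hsupp : (π.cycleOf N).support = {N, σ N, σ b} := by
      apply Finset.Subset.antisymm
      · intro y hy
        rw [Equiv.Perm.mem_support_cycleOf_iff] at hy
        obtain ⟨i, _, hi⟩ := hy.1.exists_pow_eq'
        rw [← hi]; exact horbit i
      · intro y hy
        rw [Equiv.Perm.mem_support_cycleOf_iff]
        refine ⟨?_, hNsupp⟩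
        simp only [Finset.mem_insert, Finset.mem_singleton] at hy
        rcases hy with rfl | rfl | rfl
        · exact Equiv.Perm.SameCycle.refl _ _
        · exact ⟨1, by simpa using hπN⟩
        · exact ⟨2, by simp [zpow_ofNat, pow_succ, Equiv.Perm.mul_apply, hπN, hπs]⟩
    apply hcyc N
    rw [hsupp]
    rw [Finset.card_eq_three]
    exact ⟨N, σ N, σ b, Ne.symm hNs, Ne.symm hNt, hst, rfl⟩
  obtain ⟨E, hE, hDE⟩ := key
  have h1 : D.card ≤ S.card + 2 := by
    calc D.card ≤ (S.image Fin.castSucc ∪ E).card := Finset.card_le_card hDE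
    _ ≤ (S.image Fin.castSucc).card + E.card := Finset.card_union_le _ _
    _ ≤ S.card + 2 := by
        have := Finset.card_image_le (s := S) (f := Fin.castSucc)
        omega
  have h2 : hd σ τ = D.card := rfl
  have h3 : hd (contract σ) (contract τ) = S.card := rfl
  rw [h3]
  rw [h2] at hdist
  omega
end
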